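/- Let G be a finite group, H a normal subgroup of G, and n ∈ ℕ with gcd(|G|, n) = 1. Then in the enhanced quotient graph 𝒢_{H×{0}}(G × ℤ_n), every vertex of the form (e, a) with gcd(a, n) = 1 is a cone vertex. -/

import Mathlib

/-- The enhanced power graph of a group `K`: distinct `x, y` are adjacent iff
`x, y ∈ ⟨z⟩` for some `z ∈ K`. -/
def enhancedPowerGraph (K : Type*) [Group K] : SimpleGraph K where
  Adj x y := x ≠ y ∧ ∃ z : K, x ∈ Subgroup.zpowers z ∧ y ∈ Subgroup.zpowers z
  symm := ⟨by
    rintro x y ⟨hxy, z, hx, hy⟩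
    exact ⟨hxy.symm, z, hy, hx⟩⟩
  loopless := ⟨by rintro x ⟨hx, -⟩; exact hx rfl⟩

/-- The enhanced quotient graph `𝒢_H(G)`: vertex set `(G \ H) ∪ {e}`, and distinct
vertices `x, y` are adjacent iff `xH = yH` or `xH, yH ∈ ⟨zH⟩` for some `z ∈ G`. -/
def enhancedQuotientGraph (G : Type*) [Group G] (H : Subgroup G) [H.Normal] :
    SimpleGraph {x : G // x ∉ H ∨ x = 1} where
  Adj a b := a ≠ b ∧
    ((QuotientGroup.mk (a : G) : G ⧸ H) = QuotientGroup.mk (b : G) ∨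
      ∃ z : G, (QuotientGroup.mk (a : G) : G ⧸ H) ∈
          Subgroup.zpowers (QuotientGroup.mk z) ∧
        (QuotientGroup.mk (b : G) : G ⧸ H) ∈ Subgroup.zpowers (QuotientGroup.mk z))
  symm := ⟨by
    rintro a b ⟨hab, h | ⟨z, hz1, hz2⟩⟩
    · exact ⟨hab.symm, Or.inl h.symm⟩
    · exact ⟨hab.symm, Or.inr ⟨z, hz2, hz1⟩⟩⟩
  loopless := ⟨by rintro a ⟨ha, -⟩; exact ha rfl⟩

/-- If `gcd(|G|, n) = 1`, then in `𝒢_{H×{0}}(G × ℤ_n)` every vertex of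
the form `(e, a)` with `gcd(a, n) = 1` is a cone vertex. -/
theorem enhancedQuotientGraph_prod_zmod_cone {G : Type*} [Group G] [Fintype G]
    (H : Subgroup G) [H.Normal] (n : ℕ) [NeZero n]
    (h : Nat.gcd (Fintype.card G) n = 1)
    (v : {x : G × Multiplicative (ZMod n) //
        x ∉ H.prod (⊥ : Subgroup (Multiplicative (ZMod n))) ∨ x = 1})
    (hv1 : (v : G × Multiplicative (ZMod n)).1 = 1)
    (hv2 : IsUnit (Multiplicative.toAdd (v : G × Multiplicative (ZMod n)).2)) :
    ∀ w, w ≠ v →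
      (enhancedQuotientGraph (G × Multiplicative (ZMod n))
        (H.prod (⊥ : Subgroup (Multiplicative (ZMod n))))).Adj v w := by
  intro w hw
  classical
  set g : G := (w : G × Multiplicative (ZMod n)).1 with hg
  have hfin : Finite (G ⧸ H) := Quotient.finite _
  set m : ℕ := orderOf (QuotientGroup.mk g : G ⧸ H) with hm
  have hmdvd : m ∣ Nat.card (G ⧸ H) := orderOf_dvd_natCard _
  have hq : Nat.card (G ⧸ H) ∣ Nat.card G :=
    ⟨Nat.card H, Subgroup.card_eq_card_quotient_mul_card_subgroup H⟩
  have hcop : Nat.Coprime m n :=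
    Nat.Coprime.coprime_dvd_left (hmdvd.trans hq)
      (by simpa [Nat.card_eq_fintype_card] using h)
  have hmu : IsUnit ((m : ZMod n)) := (ZMod.isUnit_iff_coprime m n).mpr hcop
  obtain ⟨u, hu⟩ := hmu
  have key : ∀ (r : ℤ) (c : ZMod n), ∃ kk : ℤ, ((kk : ZMod n) = c ∧
      (QuotientGroup.mk g : G ⧸ H) ^ kk = (QuotientGroup.mk g : G ⧸ H) ^ r) := by
    intro r c
    refine ⟨r + (m : ℤ) * ((((u⁻¹ : (ZMod n)ˣ) : ZMod n) * (c - (r : ZMod n))).val : ℤ), ?_, ?_⟩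
    · push_cast
      rw [ZMod.natCast_val, ZMod.cast_id, ← hu, ← mul_assoc, u.mul_inv]
      ring
    · rw [zpow_add, zpow_mul]
      norm_cast
      rw [pow_orderOf_eq_one]
      simp
  obtain ⟨k, hk1, hk2⟩ := key 0 (Multiplicative.toAdd (v : G × Multiplicative (ZMod n)).2)
  obtain ⟨j, hj1, hj2⟩ := key 1 (Multiplicative.toAdd (w : G × Multiplicative (ZMod n)).2)
  rw [zpow_zero] at hk2
  rw [zpow_one] at hj2
  refine ⟨hw.symm, Or.inr ⟨(g, Multiplicative.ofAdd 1), ?_, ?_⟩⟩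
  · refine Subgroup.mem_zpowers_iff.mpr ⟨k, ?_⟩
    rw [← QuotientGroup.mk_zpow]
    refine (QuotientGroup.eq).mpr (Subgroup.mem_prod.mpr ⟨?_, ?_⟩)
    · have : g ^ k ∈ H := (QuotientGroup.eq_one_iff _).mp (by rw [QuotientGroup.mk_zpow]; exact hk2)
      simpa [hv1] using H.inv_mem this
    · rw [Subgroup.mem_bot]
      apply Multiplicative.toAdd.injective
      simp [toAdd_zpow, zsmul_eq_mul, ← hk1]
  · refine Subgroup.mem_zpowers_iff.mpr ⟨j, ?_⟩
    rw [← QuotientGroup.mk_zpow]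
    refine (QuotientGroup.eq).mpr (Subgroup.mem_prod.mpr ⟨?_, ?_⟩)
    · have : ((g ^ j)⁻¹ * g) ∈ H := (QuotientGroup.eq).mp (by rw [QuotientGroup.mk_zpow]; exact hj2)
      simpa using this
    · rw [Subgroup.mem_bot]
      apply Multiplicative.toAdd.injective
      simp [toAdd_zpow, zsmul_eq_mul, ← hj1]
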